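/- Every n-dimensional opetopic sequence N_0 → N_1 → … → N_n is isomorphic, as a sequence of opetopic networks and constellations, to the sequence G_0^−(⟨K⟩) → G_1^−(⟨K⟩) → … → G_n^−(⟨K⟩) for some n-dimensional opetopic directed complex K; moreover K is reduced if and only if the given sequence is an n-dimensional opetope (i.e., every N_q is reduced). -/

import Mathlib

open Finsupp

/-- A free augmented directed complex, encoded by its distinguished graded basis:
`B` is the set of basis elements, `dim` the dimension function, `bd a` the boundary
chain of a basis element `a`, and `eps` the augmentation (supported in dimension 0). -/
structure FADC where
  B : Type
  dim : B → ℕ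
  bd : B → (B →₀ ℤ)
  eps : B → ℤ
  bd_dim : ∀ a b, b ∈ (bd a).support → dim b + 1 = dim a
  eps_dim : ∀ b, 0 < dim b → eps b = 0
  bd_bd : ∀ a : B, ((bd a).sum fun b n => n • bd b) = 0
  eps_bd : ∀ a : B, ((bd a).sum fun b n => n * eps b) = 0

namespace FADC

variable (K : FADC)

/-- The boundary homomorphism `∂`, extended to chains. -/
noncomputable def bdc (c : K.B →₀ ℤ) : K.B →₀ ℤ := c.sum fun b n => n • K.bd b

/-- The augmentation `ε`, extended to chains. -/
noncomputable def epsc (c : K.B →₀ ℤ) : ℤ := c.sum fun b n => n * K.eps b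

/-- `∂⁺c`, the positive part of `∂c`. -/
noncomputable def bdp (c : K.B →₀ ℤ) : K.B →₀ ℤ := (K.bdc c).mapRange (fun n => max n 0) (by simp)

/-- `∂⁻c`, the negative part of `∂c`. -/
noncomputable def bdm (c : K.B →₀ ℤ) : K.B →₀ ℤ := (-K.bdc c).mapRange (fun n => max n 0) (by simp)

/-- `K` is unital if `ε((∂⁻)^q a) = ε((∂⁺)^q a) = 1` for every `q`-dimensional
basis element `a`. -/
def Unital : Prop := ∀ a : K.B,
  K.epsc (K.bdm^[K.dim a] (Finsupp.single a 1)) = 1 ∧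
  K.epsc (K.bdp^[K.dim a] (Finsupp.single a 1)) = 1

/-- `K` is loop-free if its basis elements admit a (strict) partial order such that
for every basis element `a` and every `r > 0`, the basis elements occurring in
`(∂⁻)^r a` strictly precede those occurring in `(∂⁺)^r a`. -/
def LoopFree : Prop :=
  ∃ lt : K.B → K.B → Prop, IsStrictOrder K.B lt ∧
    ∀ (a : K.B) (r : ℕ), 0 < r →
      ∀ b ∈ (K.bdm^[r] (Finsupp.single a 1)).support,
        ∀ b' ∈ (K.bdp^[r] (Finsupp.single a 1)).support, lt b b'

/-- `K` is atomic of dimension `n`. -/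
def Atomic (n : ℕ) : Prop :=
  (∀ b : K.B, K.dim b ≤ n) ∧
  (∃! g : K.B, K.dim g = n) ∧
  (∀ b : K.B, K.dim b < n → ∃ a : K.B, K.dim b < K.dim a ∧
    (b ∈ (K.bdm (Finsupp.single a 1)).support ∨ b ∈ (K.bdp (Finsupp.single a 1)).support))

/-- `g_q^α(x)`: given `x_q^- = xq` and `x_{q+1}^α = c`, this is
`x_q^- + ∂⁺a_1 + … + ∂⁺a_k` where `a_1, …, a_k` are the terms of `c`. -/
noncomputable def gch (xq c : K.B →₀ ℤ) : K.B →₀ ℤ :=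
  xq + c.sum fun b n => n • K.bdp (Finsupp.single b 1)

/-- The negative chains `⟨K⟩_q^- = (∂⁻)^{n-q} g` of the canonical atom. -/
noncomputable def atomNeg (g : K.B) (n q : ℕ) : K.B →₀ ℤ :=
  if q ≤ n then K.bdm^[n - q] (Finsupp.single g 1) else 0

/-- The positive chains `⟨K⟩_q^+ = (∂⁺)^{n-q} g` of the canonical atom. -/
noncomputable def atomPos (g : K.B) (n q : ℕ) : K.B →₀ ℤ :=
  if q ≤ n then K.bdp^[n - q] (Finsupp.single g 1) else 0

end FADC

/-- Membership in `νK`: the double sequence `(x_0^-, x_0^+ | x_1^-, x_1^+ | …)`,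
given by `xm` and `xp`, is a member of `νK`. -/
structure NuMem (K : FADC) (xm xp : ℕ → (K.B →₀ ℤ)) : Prop where
  dim_m : ∀ q, ∀ b ∈ (xm q).support, K.dim b = q
  dim_p : ∀ q, ∀ b ∈ (xp q).support, K.dim b = q
  nonneg_m : ∀ q b, 0 ≤ xm q b
  nonneg_p : ∀ q b, 0 ≤ xp q b
  fin : ∃ n, ∀ q, n < q → xm q = 0 ∧ xp q = 0
  eps_m : K.epsc (xm 0) = 1
  eps_p : K.epsc (xp 0) = 1
  bd_m : ∀ q, K.bdc (xm (q + 1)) = xp q - xm q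
  bd_p : ∀ q, K.bdc (xp (q + 1)) = xp q - xm q

/-- `K` together with the class `thin` of thin basis elements is an
`n`-dimensional opetopic directed complex. -/
structure IsODC (K : FADC) (thin : K.B → Prop) (n : ℕ) : Prop where
  atomic : K.Atomic n
  loopFree : K.LoopFree
  unital : K.Unital
  thin_pos : ∀ b, thin b → 0 < K.dim b
  bdp_basis : ∀ b : K.B, 0 < K.dim b →
    ∃ a : K.B, ¬ thin a ∧ K.bdp (Finsupp.single b 1) = Finsupp.single a 1
  bdm_thin : ∀ b : K.B, thin b →
    ∃ a : K.B, ¬ thin a ∧ K.bdm (Finsupp.single b 1) = Finsupp.single a 1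

/-- An opetopic directed complex is reduced if every thin basis element is `∂⁻a`
for some other basis element `a`. -/
def ODCReduced (K : FADC) (thin : K.B → Prop) : Prop :=
  ∀ b, thin b → ∃ a, a ≠ b ∧ K.bdm (Finsupp.single a 1) = Finsupp.single b 1

/-- A network: finite sets of edges and vertices with partially defined source and
target functions; input edges are those with no source, output edges those with no
target. -/
structure Network where
  E : Type
  V : Type
  finE : Finite E
  finV : Finite V
  src : E → Option V
  tgt : E → Option V

namespace Network

variable (N : Network)

/-- One step of a path: the target of `e` is the source of `e'`. -/
def step (e e' : N.E) : Prop := ∃ v : N.V, N.tgt e = some v ∧ N.src e' = some v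

/-- There is a path from `e` to `e'`. -/
def PathTo (e e' : N.E) : Prop := Relation.ReflTransGen N.step e e'

/-- A network is acyclic if there is no nontrivial path from an edge to itself. -/
def Acyclic : Prop := ∀ e : N.E, ¬ Relation.TransGen N.step e e

/-- A network is linear if it is acyclic and consists of a single path
`e_0, v_1, e_1, …, v_k, e_k`. -/
def Linear : Prop := N.Acyclic ∧
  ∃ (k : ℕ) (e : Fin (k + 1) ≃ N.E) (v : Fin k ≃ N.V),
    N.src (e 0) = none ∧ N.tgt (e (Fin.last k)) = none ∧
    ∀ i : Fin k, N.tgt (e i.castSucc) = some (v i) ∧ N.src (e i.succ) = some (v i)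

/-- A network is confluent if it is acyclic, has a unique output edge, and every
vertex is the source of exactly one edge and the target of at least one edge. -/
def Confluent : Prop := N.Acyclic ∧ (∃! e : N.E, N.tgt e = none) ∧
  (∀ v : N.V, ∃! e : N.E, N.src e = some v) ∧ (∀ v : N.V, ∃ e : N.E, N.tgt e = some v)

end Network

/-- An opetopic network: an acyclic network with a unique output edge, together with
thin edges (which are inputs) and thin vertices (each the target of exactly one edge,
which is not thin). -/
structure OpetopicNetwork extends Network where
  thinE : E → Prop
  thinV : V → Prop
  acyclic : toNetwork.Acyclic
  out_unique : ∃! e : E, tgt e = none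
  thinE_input : ∀ e, thinE e → src e = none
  thinV_unique : ∀ v, thinV v → ∃! e, tgt e = some v
  thinV_nonthin : ∀ v e, thinV v → tgt e = some v → ¬ thinE e

/-- An opetopic network is reduced if every thin edge has a target vertex which is
the target of no other edge. -/
def OpetopicNetwork.Reduced (N : OpetopicNetwork) : Prop :=
  ∀ e, N.thinE e → ∃ v, N.tgt e = some v ∧ ∀ e', N.tgt e' = some v → e' = e

/-- `c` is a constellation from `N` to `P`: a bijection from the vertices of `N` to
the input edges of `P`, preserving thinness, such that for every edge `e` of `P`
there is exactly one edge of `N` with a source but not a target in the preimage of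
`I_e` (the input edges of `P` from which there is a path to `e`). -/
def IsConstellation (N P : OpetopicNetwork) (c : N.V → P.E) : Prop :=
  (∀ v, P.src (c v) = none) ∧
  Function.Injective c ∧
  (∀ e : P.E, P.src e = none → ∃ v, c v = e) ∧
  (∀ v, N.thinV v ↔ P.thinE (c v)) ∧
  (∀ e : P.E, ∃! e' : N.E,
    (∃ v, N.src e' = some v ∧ P.toNetwork.PathTo (c v) e) ∧
    ¬ (∃ v, N.tgt e' = some v ∧ P.toNetwork.PathTo (c v) e))

/-- An `n`-dimensional opetopic sequence `N_0 → N_1 → … → N_n`. -/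
structure OpetopicSequence (n : ℕ) where
  N : Fin (n + 1) → OpetopicNetwork
  c : ∀ q : Fin n, (N q.castSucc).V → (N q.succ).E
  constell : ∀ q : Fin n, IsConstellation (N q.castSucc) (N q.succ) (c q)
  linear0 : (N 0).toNetwork.Linear
  noThin0 : ∀ e, ¬ (N 0).thinE e
  top_single : ∃! _e : (N (Fin.last n)).E, True
  top_noV : IsEmpty (N (Fin.last n)).V

/-- An isomorphism of opetopic sequences: families of bijections on edges and
vertices preserving sources, targets, thin edges and thin vertices, and commuting
with the constellations. -/
def SeqIso (n : ℕ) (S S' : OpetopicSequence n) : Prop :=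
  ∃ (fE : ∀ q : Fin (n + 1), (S.N q).E ≃ (S'.N q).E)
    (fV : ∀ q : Fin (n + 1), (S.N q).V ≃ (S'.N q).V),
    (∀ q : Fin (n + 1),
      (∀ e v, (S.N q).src e = some v ↔ (S'.N q).src (fE q e) = some (fV q v)) ∧
      (∀ e v, (S.N q).tgt e = some v ↔ (S'.N q).tgt (fE q e) = some (fV q v)) ∧
      (∀ e, (S.N q).thinE e ↔ (S'.N q).thinE (fE q e)) ∧
      (∀ v, (S.N q).thinV v ↔ (S'.N q).thinV (fV q v))) ∧
    (∀ q : Fin n, ∀ v, fE q.succ (S.c q v) = S'.c q (fV q.castSucc v))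

/-- The opetopic sequence `S` realizes the sequence
`G_0^-(⟨K⟩) → … → G_n^-(⟨K⟩)` associated to the opetopic directed complex `K`
(with top basis element `g` and thin elements `thin`): the edges of `S.N q`
correspond bijectively to the terms of `g_q^-(⟨K⟩)`, the vertices to the terms of
`⟨K⟩_{q+1}^-`, sources, targets and thinness are as prescribed by `∂⁺`, `∂⁻` and
`thin`, and the constellations are the identity correspondences. -/
def RealizedBy (K : FADC) (thin : K.B → Prop) (n : ℕ) (g : K.B)
    (S : OpetopicSequence n) : Prop :=
  ∃ (eE : ∀ q : Fin (n + 1), (S.N q).E → K.B)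
    (eV : ∀ q : Fin (n + 1), (S.N q).V → K.B),
    (∀ q : Fin (n + 1),
      Function.Injective (eE q) ∧
      (∀ ed, eE q ed ∈ (K.gch (K.atomNeg g n q.1) (K.atomNeg g n (q.1 + 1))).support) ∧
      (∀ b ∈ (K.gch (K.atomNeg g n q.1) (K.atomNeg g n (q.1 + 1))).support,
        ∃ ed, eE q ed = b) ∧
      Function.Injective (eV q) ∧
      (∀ v, eV q v ∈ (K.atomNeg g n (q.1 + 1)).support) ∧
      (∀ b ∈ (K.atomNeg g n (q.1 + 1)).support, ∃ v, eV q v = b) ∧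
      (∀ ed v, (S.N q).src ed = some v ↔
        eE q ed ∈ (K.bdp (Finsupp.single (eV q v) 1)).support) ∧
      (∀ ed v, (S.N q).tgt ed = some v ↔
        eE q ed ∈ (K.bdm (Finsupp.single (eV q v) 1)).support) ∧
      (∀ ed, (S.N q).thinE ed ↔ thin (eE q ed)) ∧
      (∀ v, (S.N q).thinV v ↔ thin (eV q v))) ∧
    (∀ q : Fin n, ∀ v, eE q.succ (S.c q v) = eV q.castSucc v)

/-- A bundled `n`-dimensional opetopic directed complex. -/
structure ODCBundle (n : ℕ) where
  K : FADC
  thin : K.B → Prop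
  g : K.B
  dim_g : K.dim g = n
  isODC : IsODC K thin n

/-- Isomorphism of (bundled) opetopic directed complexes: a dimension- and
thinness-preserving bijection of bases commuting with boundaries and augmentations. -/
def ODCIso {n : ℕ} (A A' : ODCBundle n) : Prop :=
  ∃ φ : A.K.B ≃ A'.K.B,
    (∀ b, A'.K.dim (φ b) = A.K.dim b) ∧
    (∀ b, A'.thin (φ b) ↔ A.thin b) ∧
    (∀ b, A'.K.bd (φ b) = Finsupp.equivMapDomain φ (A.K.bd b)) ∧
    (∀ b, A'.K.eps (φ b) = A.K.eps b)

/-!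
The complex `K` has as basis the edges of all the networks, an edge of `N_q` having dimension `q`.
A constellation `N_q → N_{q+1}` identifies the vertices of `N_q` with the input edges of
`N_{q+1}`; for an edge `e` of `N_{q+1}` let `R_e` be the set of vertices of `N_q` whose input edge
has a path to `e`. Then `∂e` is the sum of the edges of `N_q` leaving `R_e` minus the sum of those
entering it. The constellation axiom says that exactly one edge leaves `R_e`, so `∂⁺e` is a single
edge. Writing `∂e` as the sum over `v ∈ R_e` of (outgoing minus incoming edges at `v`), `∂∂ = 0`
reduces to: a path starting at an input edge passes through the outgoing edge of `v` iff it
passes through an incoming edge of `v`, and then through exactly one. Loop-freeness is witnessed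
by the path order inside each network, and since all of `N_q` lies below the output edge of
`N_{q+1}`, `⟨K⟩_q^-` is the chain of input edges of `N_q`, whence `G_q^-(⟨K⟩) = N_q`. Finally,
`∂⁻e` is a single edge iff every vertex of `R_e` has exactly one incoming edge (sum the
coefficients of `∂e`), which turns reducedness of `K` into reducedness of the networks.
-/

open Relation

namespace FADC

variable (K : FADC)

lemma bdc_eq_linearCombination : K.bdc = Finsupp.linearCombination ℤ K.bd :=
  funext fun c => (Finsupp.linearCombination_apply ℤ c).symm

lemma epsc_eq_linearCombination : K.epsc = Finsupp.linearCombination ℤ K.eps :=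
  funext fun c => (Finsupp.linearCombination_apply ℤ c).symm

lemma bdc_single (b : K.B) (m : ℤ) : K.bdc (Finsupp.single b m) = m • K.bd b := by
  simp [bdc_eq_linearCombination]

lemma epsc_single (b : K.B) (m : ℤ) : K.epsc (Finsupp.single b m) = m * K.eps b := by
  simp [epsc_eq_linearCombination]

lemma epsc_bdc (c : K.B →₀ ℤ) : K.epsc (K.bdc c) = 0 := by
  induction c using Finsupp.induction_linear with
  | zero => simp [bdc_eq_linearCombination, epsc_eq_linearCombination]
  | add x y hx hy => simp_all [bdc_eq_linearCombination, epsc_eq_linearCombination]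
  | single b m =>
    rw [bdc_single, epsc_eq_linearCombination, map_zsmul, ← epsc_eq_linearCombination]
    simp [epsc, K.eps_bd b]

lemma bdp_sub_bdm (c : K.B →₀ ℤ) : K.bdp c - K.bdm c = K.bdc c := by
  ext b
  simp only [Finsupp.sub_apply, bdp, bdm, Finsupp.mapRange_apply, Finsupp.neg_apply]
  omega

lemma bdc_bdc (c : K.B →₀ ℤ) : K.bdc (K.bdc c) = 0 := by
  induction c using Finsupp.induction_linear with
  | zero => simp [bdc_eq_linearCombination]
  | add x y hx hy => simp_all [bdc_eq_linearCombination]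
  | single b m =>
    rw [bdc_single, bdc_eq_linearCombination, map_zsmul, ← bdc_eq_linearCombination]
    exact smul_eq_zero_of_right m (K.bd_bd b)

lemma bdc_bdp (c : K.B →₀ ℤ) : K.bdc (K.bdp c) = K.bdc (K.bdm c) := by
  have h := congrArg K.bdc (K.bdp_sub_bdm c)
  rw [bdc_bdc, bdc_eq_linearCombination, map_sub, sub_eq_zero] at h
  simpa [bdc_eq_linearCombination] using h

lemma bdm_bdp (c : K.B →₀ ℤ) : K.bdm (K.bdp c) = K.bdm (K.bdm c) := by
  simp only [bdm, bdc_bdp]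

lemma bdm_iterate_succ (r : ℕ) (c : K.B →₀ ℤ) : K.bdm^[r + 1] c = K.bdm (K.bdp^[r] c) := by
  induction r with
  | zero => rfl
  | succ r ih => rw [Function.iterate_succ_apply', ih, Function.iterate_succ_apply', bdm_bdp]

lemma epsc_bdm (c : K.B →₀ ℤ) : K.epsc (K.bdm c) = K.epsc (K.bdp c) := by
  have h := congrArg K.epsc (K.bdp_sub_bdm c)
  rw [epsc_bdc, epsc_eq_linearCombination, map_sub, sub_eq_zero] at h
  simpa [epsc_eq_linearCombination] using h.symm

@[simp] lemma bdp_zero : K.bdp 0 = 0 := by simp [bdp, bdc_eq_linearCombination]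

@[simp] lemma bdm_zero : K.bdm 0 = 0 := by simp [bdm, bdc_eq_linearCombination]

lemma support_bdp_subset (c : K.B →₀ ℤ) : (K.bdp c).support ⊆ (K.bdc c).support := by
  intro b hb
  simp only [Finsupp.mem_support_iff, bdp, Finsupp.mapRange_apply] at hb ⊢
  omega

lemma bd_eq_zero_of_dim_eq_zero {b : K.B} (hb : K.dim b = 0) : K.bd b = 0 := by
  ext a
  by_contra ha
  have := K.bd_dim b a (Finsupp.mem_support_iff.2 ha)
  omega

lemma bdp_single_eq_zero_of_dim_eq_zero {b : K.B} (hb : K.dim b = 0) :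
    K.bdp (Finsupp.single b 1) = 0 := by
  simp [bdp, bdc_single, bd_eq_zero_of_dim_eq_zero K hb]

lemma dim_add_one_of_mem_bdp {a b : K.B} (h : b ∈ (K.bdp (Finsupp.single a 1)).support) :
    K.dim b + 1 = K.dim a := by
  have := K.support_bdp_subset _ h
  rw [bdc_single, one_smul] at this
  exact K.bd_dim a b this

def BdpSingle : Prop :=
  ∀ b : K.B, 0 < K.dim b → ∃ a, K.bdp (Finsupp.single b 1) = Finsupp.single a 1

variable {K}

lemma bdp_iterate_single (hbdp : K.BdpSingle) (a : K.B) {r : ℕ} (hr : r ≤ K.dim a) :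
    ∃ b, K.dim b + r = K.dim a ∧ K.bdp^[r] (Finsupp.single a 1) = Finsupp.single b 1 := by
  induction r with
  | zero => exact ⟨a, rfl, rfl⟩
  | succ r ih =>
    obtain ⟨b, hdim, h⟩ := ih (by omega)
    obtain ⟨b', hb'⟩ := hbdp b (by omega)
    have := K.dim_add_one_of_mem_bdp (a := b) (b := b') (by simp [hb'])
    exact ⟨b', by omega, by rw [Function.iterate_succ_apply', h, hb']⟩

lemma bdp_iterate_single_eq_zero (hbdp : K.BdpSingle) (a : K.B) {r : ℕ} (hr : K.dim a < r) :
    K.bdp^[r] (Finsupp.single a 1) = 0 := by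
  obtain ⟨b, hdim, h⟩ := bdp_iterate_single hbdp a le_rfl
  obtain ⟨s, rfl⟩ := Nat.exists_eq_add_of_lt hr
  rw [add_assoc, add_comm, Function.iterate_add_apply, Function.iterate_add_apply, h,
    Function.iterate_one, bdp_single_eq_zero_of_dim_eq_zero K (by omega)]
  exact Function.iterate_fixed K.bdp_zero s

lemma unital_of_bdpSingle (hbdp : K.BdpSingle)
    (heps : ∀ b, K.dim b = 0 → K.eps b = 1) : K.Unital := by
  intro a
  obtain ⟨b, hdim, hb⟩ := bdp_iterate_single hbdp a le_rfl
  have hpos : K.epsc (K.bdp^[K.dim a] (Finsupp.single a 1)) = 1 := by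
    rw [hb, epsc_single, one_mul, heps b (by omega)]
  refine ⟨?_, hpos⟩
  rcases Nat.eq_zero_or_pos (K.dim a) with h0 | hpos'
  · simpa [h0] using hpos
  obtain ⟨r, hr⟩ := Nat.exists_eq_succ_of_ne_zero hpos'.ne'
  rw [hr, bdm_iterate_succ, epsc_bdm, ← Function.iterate_succ_apply' K.bdp, ← hr, hpos]

lemma loopFree_of_bdpSingle (hbdp : K.BdpSingle)
    (lt : K.B → K.B → Prop) [IsStrictOrder K.B lt]
    (hlt : ∀ t, ∀ b ∈ (K.bdm (Finsupp.single t 1)).support,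
      ∀ b' ∈ (K.bdp (Finsupp.single t 1)).support, lt b b') : K.LoopFree := by
  refine ⟨lt, inferInstance, fun a r hr b hb b' hb' => ?_⟩
  obtain ⟨r, rfl⟩ := Nat.exists_eq_succ_of_ne_zero hr.ne'
  rw [bdm_iterate_succ] at hb
  rw [Function.iterate_succ_apply'] at hb'
  by_cases hra : r ≤ K.dim a
  · obtain ⟨t, -, h⟩ := bdp_iterate_single hbdp a hra
    rw [h] at hb hb'
    exact hlt t b hb b' hb'
  · simp [bdp_iterate_single_eq_zero hbdp a (not_le.1 hra)] at hb

end FADC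

lemma sum_boole_eq_ite_exists {α : Type*} [Fintype α] {Q : α → Prop} [DecidablePred Q]
    [Decidable (∃ a, Q a)] (hQ : ∀ a b, Q a → Q b → a = b) :
    (∑ a, if Q a then (1 : ℤ) else 0) = if ∃ a, Q a then 1 else 0 := by
  split_ifs with h
  · obtain ⟨a, ha⟩ := h
    rw [Finset.sum_eq_single a (fun b _ hb => if_neg fun hQb => hb (hQ b a hQb ha))
      (by simp), if_pos ha]
  · exact Finset.sum_eq_zero fun a _ => if_neg fun ha => h ⟨a, ha⟩

namespace Network

variable {N : Network}

lemma eq_of_pathTo_of_src_eq_none {i x : N.E} (hi : N.src i = none) (h : N.PathTo x i) :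
    x = i := by
  rcases ReflTransGen.cases_tail h with h | ⟨_, _, v, _, hv⟩
  · exact h.symm
  · simp [hi] at hv

lemma Acyclic.src_ne_of_tgt (hN : N.Acyclic) {e : N.E} {v : N.V} (ht : N.tgt e = some v) :
    N.src e ≠ some v :=
  fun hs => hN e (TransGen.single ⟨v, ht, hs⟩)

lemma Acyclic.pathTo_of_forall (hN : N.Acyclic) (P : N.E → Prop) {t : N.E}
    (hP : ∀ x, P x → x ≠ t → ∃ y, N.step x y ∧ P y) {x : N.E} (hx : P x) :
    N.PathTo x t := by
  have := N.finE
  have : IsTrans N.E (flip (TransGen N.step)) := ⟨fun _ _ _ h₁ h₂ => h₂.trans h₁⟩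
  have : Std.Irrefl (flip (TransGen N.step)) := ⟨hN⟩
  induction x using (Finite.wellFounded_of_trans_of_irrefl (flip (TransGen N.step))).induction
    with
  | _ x ih =>
    by_cases hxt : x = t
    · exact hxt ▸ ReflTransGen.refl
    obtain ⟨y, hxy, hy⟩ := hP x hx hxt
    exact ReflTransGen.head hxy (ih y (TransGen.single hxy) hy)

lemma step_unique (hout : ∀ v : N.V, ∃! f, N.src f = some v) {e f f' : N.E}
    (h : N.step e f) (h' : N.step e f') : f = f' := by
  obtain ⟨v, hv, hf⟩ := h
  obtain ⟨v', hv', hf'⟩ := h'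
  obtain rfl : v = v' := Option.some_injective _ (hv.symm.trans hv')
  exact (hout v).unique hf hf'

lemma pathTo_total (hout : ∀ v : N.V, ∃! f, N.src f = some v) {a b c : N.E}
    (hb : N.PathTo a b) (hc : N.PathTo a c) :
    N.PathTo b c ∨ N.PathTo c b := by
  induction hb using ReflTransGen.head_induction_on with
  | refl => exact Or.inl hc
  | head hstep _ ih =>
    rcases ReflTransGen.cases_head hc with rfl | ⟨z, hz, hzc⟩
    · exact Or.inr (ReflTransGen.head hstep ‹_›)
    · exact ih (step_unique hout hz hstep ▸ hzc)

lemma eq_of_tgt_eq_of_pathTo (hout : ∀ v : N.V, ∃! f, N.src f = some v) (hN : N.Acyclic)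
    {i f f' : N.E} {v : N.V}
    (ht : N.tgt f = some v) (ht' : N.tgt f' = some v)
    (hp : N.PathTo i f) (hp' : N.PathTo i f') : f = f' := by
  have key : ∀ x y : N.E, N.tgt x = some v → N.tgt y = some v → N.PathTo x y → x = y := by
    intro x y hx hy hxy
    rcases ReflTransGen.cases_head hxy with rfl | ⟨z, ⟨w, hxw, hzw⟩, hzy⟩
    · rfl
    · obtain rfl : v = w := Option.some_injective _ (hx.symm.trans hxw)
      exact (hN z (TransGen.tail' hzy ⟨v, hy, hzw⟩)).elim
  rcases pathTo_total hout hp hp' with h | h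
  · exact key _ _ ht ht' h
  · exact (key _ _ ht' ht h).symm

lemma pathTo_iff_exists_tgt {i z : N.E} {v : N.V} (hi : N.src i = none)
    (hz : N.src z = some v) :
    N.PathTo i z ↔ ∃ f, N.tgt f = some v ∧ N.PathTo i f := by
  constructor
  · intro h
    rcases ReflTransGen.cases_tail h with rfl | ⟨f, hf, w, hfw, hzw⟩
    · simp [hi] at hz
    · obtain rfl : v = w := Option.some_injective _ (hz.symm.trans hzw)
      exact ⟨f, hfw, hf⟩
  · rintro ⟨f, hf, hp⟩
    exact ReflTransGen.tail hp ⟨v, hf, hz⟩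

lemma Linear.existsUnique_tgt (h : N.Linear) (v : N.V) :
    ∃! f, N.tgt f = some v := by
  obtain ⟨_, k, e, w, -, hlast, hstep⟩ := h
  refine ⟨e (w.symm v).castSucc, ?_, fun f hf => ?_⟩
  · exact ((hstep _).1).trans (congrArg _ (w.apply_symm_apply v))
  obtain ⟨j, rfl⟩ := e.surjective f
  induction j using Fin.lastCases with
  | last => simp [hlast] at hf
  | cast i =>
    rw [(hstep i).1, Option.some_inj] at hf
    rw [← hf, w.symm_apply_apply]

end Network

namespace OpetopicNetwork

variable (N : OpetopicNetwork)

noncomputable def output : N.E := N.out_unique.exists.choose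

lemma tgt_output : N.tgt N.output = none := N.out_unique.exists.choose_spec

lemma eq_output {e : N.E} (he : N.tgt e = none) : e = N.output :=
  N.out_unique.unique he N.tgt_output

lemma pathTo_output (hout : ∀ v : N.V, ∃ f, N.src f = some v) (e : N.E) :
    N.PathTo e N.output := by
  refine N.acyclic.pathTo_of_forall (fun _ => True) (fun x _ hx => ?_) trivial
  cases hv : N.tgt x with
  | none => exact (hx (N.eq_output hv)).elim
  | some v =>
    obtain ⟨f, hf⟩ := hout v
    exact ⟨f, ⟨v, hv, hf⟩, trivial⟩

end OpetopicNetwork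

namespace IsConstellation

variable {N P : OpetopicNetwork} {c : N.V → P.E}

lemma src_eq_none (hc : IsConstellation N P c) (v : N.V) : P.src (c v) = none := hc.1 v

lemma injective (hc : IsConstellation N P c) : Function.Injective c := hc.2.1

lemma exists_eq (hc : IsConstellation N P c) (e : P.E) (he : P.src e = none) : ∃ v, c v = e :=
  hc.2.2.1 e he

lemma thinV_iff (hc : IsConstellation N P c) (v : N.V) : N.thinV v ↔ P.thinE (c v) := hc.2.2.2.1 v

lemma pathTo_iff (hc : IsConstellation N P c) {v w : N.V} : P.PathTo (c w) (c v) ↔ w = v :=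
  ⟨fun h => hc.injective (Network.eq_of_pathTo_of_src_eq_none (hc.src_eq_none v) h),
    fun h => h ▸ ReflTransGen.refl⟩

lemma existsUnique_exit (hc : IsConstellation N P c) (e : P.E) :
    ∃! f : N.E, (∃ v, N.src f = some v ∧ P.PathTo (c v) e) ∧
      ¬ ∃ v, N.tgt f = some v ∧ P.PathTo (c v) e :=
  hc.2.2.2.2 e

noncomputable def exitEdge (hc : IsConstellation N P c) (e : P.E) : N.E :=
  (hc.existsUnique_exit e).exists.choose

lemma exitEdge_spec (hc : IsConstellation N P c) (e : P.E) :
    (∃ v, N.src (hc.exitEdge e) = some v ∧ P.PathTo (c v) e) ∧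
      ¬ ∃ v, N.tgt (hc.exitEdge e) = some v ∧ P.PathTo (c v) e :=
  (hc.existsUnique_exit e).exists.choose_spec

lemma eq_exitEdge (hc : IsConstellation N P c) {e : P.E} {f : N.E}
    (hs : ∃ v, N.src f = some v ∧ P.PathTo (c v) e)
    (ht : ¬ ∃ v, N.tgt f = some v ∧ P.PathTo (c v) e) : f = hc.exitEdge e :=
  (hc.existsUnique_exit e).unique ⟨hs, ht⟩ (hc.exitEdge_spec e)

lemma existsUnique_src (hc : IsConstellation N P c) (v : N.V) : ∃! f, N.src f = some v := by
  refine ⟨hc.exitEdge (c v), ?_, fun f hf => hc.eq_exitEdge ⟨v, hf, ReflTransGen.refl⟩ ?_⟩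
  · obtain ⟨w, hw, hwv⟩ := (hc.exitEdge_spec (c v)).1
    rwa [hc.pathTo_iff.1 hwv] at hw
  · rintro ⟨w, hw, hwv⟩
    exact N.acyclic.src_ne_of_tgt hw (hc.pathTo_iff.1 hwv ▸ hf)

lemma nonempty_vertex (hc : IsConstellation N P c) : Nonempty N.V := by
  obtain ⟨-, ⟨⟨v, -⟩, -⟩, -⟩ := hc.existsUnique_exit P.output
  exact ⟨v⟩

lemma src_output_ne_none (hc : IsConstellation N P c) : N.src N.output ≠ none := by
  obtain ⟨v⟩ := hc.nonempty_vertex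
  obtain ⟨f, hf, -⟩ := hc.existsUnique_src v
  intro h
  have := Network.eq_of_pathTo_of_src_eq_none h
    (N.pathTo_output (fun w => (hc.existsUnique_src w).exists) f)
  simp [this, h] at hf

lemma exists_tgt (hc : IsConstellation N P c) (hout : ∀ u : P.V, ∃ f, P.src f = some u)
    (u : P.V) :
    ∃ f, P.tgt f = some u := by
  obtain ⟨z, hz⟩ := hout u
  obtain ⟨-, ⟨⟨v, -, hvz⟩, -⟩, -⟩ := hc.existsUnique_exit z
  obtain ⟨f, hf, -⟩ := (Network.pathTo_iff_exists_tgt (hc.src_eq_none v) hz).1 hvz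
  exact ⟨f, hf⟩

lemma transGen_exitEdge (hc : IsConstellation N P c) {e : P.E} {f : N.E} {u : N.V}
    (hf : N.tgt f = some u) (hu : P.PathTo (c u) e) : TransGen N.step f (hc.exitEdge e) := by
  obtain ⟨g, hg, -⟩ := hc.existsUnique_src u
  refine TransGen.head' ⟨u, hf, hg⟩ (N.acyclic.pathTo_of_forall
    (fun x => ∃ w, N.src x = some w ∧ P.PathTo (c w) e) (fun x hx hne => ?_) ⟨u, hg, hu⟩)
  obtain ⟨w, hw, hwe⟩ : ∃ w, N.tgt x = some w ∧ P.PathTo (c w) e := by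
    by_contra h
    exact hne (hc.eq_exitEdge hx h)
  obtain ⟨y, hy, -⟩ := hc.existsUnique_src w
  exact ⟨y, ⟨w, hw, hy⟩, w, hy, hwe⟩

end IsConstellation

section BdCoeff

open Classical

lemma ite_exists_option_eq_sum {α : Type*} [Fintype α] (o : Option α) (φ : α → Prop) :
    (if ∃ a, o = some a ∧ φ a then (1 : ℤ) else 0) =
      ∑ a, (if o = some a then 1 else 0) * if φ a then 1 else 0 := by
  rw [← sum_boole_eq_ite_exists fun a b ha hb => Option.some_injective _ (ha.1.symm.trans hb.1)]
  simp only [ite_and, ite_mul, one_mul, zero_mul]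

lemma Network.sum_incidence_mul_pathTo {N : Network} [Fintype N.E] (hN : N.Acyclic)
    (hout : ∀ v : N.V, ∃! f, N.src f = some v) (v : N.V) {i : N.E} (hi : N.src i = none) :
    ∑ f, ((if N.src f = some v then (1 : ℤ) else 0) - if N.tgt f = some v then 1 else 0) *
      (if N.PathTo i f then 1 else 0) = 0 := by
  obtain ⟨z, hz, -⟩ := hout v
  simp only [sub_mul, ite_mul, one_mul, zero_mul, Finset.sum_sub_distrib, ← ite_and]
  rw [sum_boole_eq_ite_exists fun f f' hf hf' => (hout v).unique hf.1 hf'.1,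
    sum_boole_eq_ite_exists fun f f' hf hf' =>
      Network.eq_of_tgt_eq_of_pathTo hout hN hf.1 hf'.1 hf.2 hf'.2, sub_eq_zero]
  refine if_congr ?_ rfl rfl
  rw [← Network.pathTo_iff_exists_tgt hi hz]
  exact ⟨fun ⟨f, hf, hp⟩ => (hout v).unique hf hz ▸ hp, fun hp => ⟨z, hz, hp⟩⟩

variable {N P : OpetopicNetwork}

noncomputable def bdCoeff (c : N.V → P.E) (e : P.E) (f : N.E) : ℤ :=
  (if ∃ v, N.src f = some v ∧ P.PathTo (c v) e then 1 else 0) -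
    if ∃ v, N.tgt f = some v ∧ P.PathTo (c v) e then 1 else 0

lemma bdCoeff_eq_sum [Fintype N.V] (c : N.V → P.E) (e : P.E) (f : N.E) :
    bdCoeff c e f = ∑ v, (if P.PathTo (c v) e then 1 else 0) *
      ((if N.src f = some v then 1 else 0) - if N.tgt f = some v then 1 else 0) := by
  rw [bdCoeff, ite_exists_option_eq_sum, ite_exists_option_eq_sum, ← Finset.sum_sub_distrib]
  exact Finset.sum_congr rfl fun v _ => by ring

lemma sum_bdCoeff_mul_bdCoeff {L M U : OpetopicNetwork} [Fintype L.V] [Fintype M.V]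
    [Fintype M.E] {c : L.V → M.E} {c' : M.V → U.E} (hin : ∀ u, M.src (c u) = none)
    (hout : ∀ v : M.V, ∃! f, M.src f = some v) (e : U.E) (h : L.E) :
    ∑ f, bdCoeff c' e f * bdCoeff c f h = 0 := by
  simp_rw [bdCoeff_eq_sum, Finset.sum_mul_sum]
  rw [Finset.sum_comm]
  refine Finset.sum_eq_zero fun v _ => ?_
  rw [Finset.sum_comm]
  refine Finset.sum_eq_zero fun u _ => ?_
  have := M.sum_incidence_mul_pathTo M.acyclic hout v (hin u)
  calc _ = (if U.PathTo (c' v) e then (1 : ℤ) else 0) *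
        ((if L.src h = some u then 1 else 0) - (if L.tgt h = some u then 1 else 0)) *
        ∑ f, ((if M.src f = some v then 1 else 0) - (if M.tgt f = some v then 1 else 0)) *
          (if M.PathTo (c u) f then 1 else 0) := by
        rw [Finset.mul_sum]
        exact Finset.sum_congr rfl fun f _ => by ring
    _ = 0 := by rw [this, mul_zero]

lemma sum_bdCoeff [Fintype N.V] [Fintype N.E] (hout : ∀ v : N.V, ∃! f, N.src f = some v)
    (c : N.V → P.E) (e : P.E) :
    ∑ f, bdCoeff c e f =
      ∑ v, (if P.PathTo (c v) e then 1 else 0) *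
        (1 - ∑ f, if N.tgt f = some v then 1 else 0) := by
  simp_rw [bdCoeff_eq_sum]
  rw [Finset.sum_comm]
  refine Finset.sum_congr rfl fun v _ => ?_
  rw [← Finset.mul_sum, Finset.sum_sub_distrib,
    sum_boole_eq_ite_exists fun f f' hf hf' => (hout v).unique hf hf',
    if_pos (hout v).exists]

lemma sum_bdCoeff_eq_zero [Fintype N.V] [Fintype N.E] (hout : ∀ v : N.V, ∃! f, N.src f = some v)
    (hin : ∀ v : N.V, ∃! f, N.tgt f = some v) (c : N.V → P.E) (e : P.E) :
    ∑ f, bdCoeff c e f = 0 := by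
  rw [sum_bdCoeff hout]
  refine Finset.sum_eq_zero fun v _ => ?_
  rw [sum_boole_eq_ite_exists fun f f' hf hf' => (hin v).unique hf hf', if_pos (hin v).exists,
    sub_self, mul_zero]

lemma card_tgt_eq_one [Fintype N.V] [Fintype N.E] (hout : ∀ v : N.V, ∃! f, N.src f = some v)
    (hin : ∀ v : N.V, ∃ f, N.tgt f = some v) {c : N.V → P.E} {a : P.E}
    (hsum : ∑ f, bdCoeff c a f = 0) {v : N.V} (hv : P.PathTo (c v) a) :
    (Finset.univ.filter fun f => N.tgt f = some v).card = 1 := by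
  simp only [sum_bdCoeff hout, Finset.sum_boole] at hsum
  rw [Finset.sum_eq_zero_iff_of_nonpos] at hsum
  · have := hsum v (Finset.mem_univ v)
    rw [if_pos hv, one_mul] at this
    omega
  · intro u _
    obtain ⟨f, hf⟩ := hin u
    have : 0 < (Finset.univ.filter fun f => N.tgt f = some u).card :=
      Finset.card_pos.2 ⟨f, by simp [hf]⟩
    split_ifs <;> omega

lemma max_neg_bdCoeff (c : N.V → P.E) (e : P.E) (f : N.E) :
    max (-bdCoeff c e f) 0 = if (∃ v, N.tgt f = some v ∧ P.PathTo (c v) e) ∧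
      ¬ ∃ v, N.src f = some v ∧ P.PathTo (c v) e then 1 else 0 := by
  unfold bdCoeff
  split_ifs <;> simp_all

namespace IsConstellation

variable {c : N.V → P.E}

lemma max_bdCoeff (hc : IsConstellation N P c) (e : P.E) (f : N.E) :
    max (bdCoeff c e f) 0 = if f = hc.exitEdge e then 1 else 0 := by
  by_cases hf : f = hc.exitEdge e
  · simp [hf, bdCoeff, (hc.exitEdge_spec e).1, (hc.exitEdge_spec e).2]
  rw [if_neg hf, bdCoeff]
  split_ifs with hs ht <;> try simp
  exact hf (hc.eq_exitEdge hs ht)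

lemma bdCoeff_self (hc : IsConstellation N P c) (v : N.V) (f : N.E) :
    bdCoeff c (c v) f =
      (if N.src f = some v then 1 else 0) - if N.tgt f = some v then 1 else 0 := by
  simp only [bdCoeff, hc.pathTo_iff, exists_eq_right]

lemma max_neg_bdCoeff_self (hc : IsConstellation N P c) (v : N.V) (f : N.E) :
    max (-bdCoeff c (c v) f) 0 = if N.tgt f = some v then 1 else 0 := by
  rw [hc.bdCoeff_self]
  by_cases ht : N.tgt f = some v
  · simp [ht, N.acyclic.src_ne_of_tgt ht]
  · split_ifs <;> simp_all

lemma src_exitEdge_self (hc : IsConstellation N P c) (v : N.V) :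
    N.src (hc.exitEdge (c v)) = some v := by
  obtain ⟨w, hw, hwv⟩ := (hc.exitEdge_spec (c v)).1
  rwa [hc.pathTo_iff.1 hwv] at hw

lemma exitEdge_self_eq_iff (hc : IsConstellation N P c) {v : N.V} {f : N.E} :
    hc.exitEdge (c v) = f ↔ N.src f = some v :=
  ⟨fun h => h ▸ hc.src_exitEdge_self v,
    fun h => (hc.existsUnique_src v).unique (hc.src_exitEdge_self v) h⟩

lemma exitEdge_eq_output (hc : IsConstellation N P c) {e : P.E}
    (he : ∀ v, P.PathTo (c v) e) : hc.exitEdge e = N.output := by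
  refine N.eq_output ?_
  cases ht : N.tgt (hc.exitEdge e) with
  | none => rfl
  | some v => exact ((hc.exitEdge_spec e).2 ⟨v, ht, he v⟩).elim

lemma max_neg_bdCoeff_of_forall_pathTo (hc : IsConstellation N P c) {e : P.E}
    (he : ∀ v, P.PathTo (c v) e) (f : N.E) :
    max (-bdCoeff c e f) 0 = if N.src f = none then 1 else 0 := by
  rw [max_neg_bdCoeff c]
  refine if_congr ⟨fun ⟨_, hs⟩ => ?_, fun hs => ⟨?_, ?_⟩⟩ rfl rfl
  · cases h : N.src f with
    | none => rfl
    | some v => exact (hs ⟨v, h, he v⟩).elim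
  · cases h : N.tgt f with
    | none => exact (hc.src_output_ne_none (N.eq_output h ▸ hs)).elim
    | some v => exact ⟨v, rfl, he v⟩
  · rintro ⟨v, hv, -⟩
    simp [hs] at hv

lemma tgt_unique_of_max_neg_bdCoeff (hc : IsConstellation N P c) [Fintype N.V] [Fintype N.E]
    (hin : ∀ v : N.V, ∃ f, N.tgt f = some v) {a : P.E} {e : N.E}
    (ha : ∀ f, max (-bdCoeff c a f) 0 = if f = e then 1 else 0) :
    ∃ v, N.tgt e = some v ∧ ∀ f, N.tgt f = some v → f = e := by
  have hsum : ∑ f, bdCoeff c a f = 0 := by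
    calc ∑ f, bdCoeff c a f = ∑ f, (max (bdCoeff c a f) 0 - max (-bdCoeff c a f) 0) :=
          Finset.sum_congr rfl fun f _ => by omega
      _ = 0 := by simp only [Finset.sum_sub_distrib, ha, hc.max_bdCoeff, Finset.sum_ite_eq',
          Finset.mem_univ, if_true, sub_self]
  have he := ha e
  rw [if_pos rfl, max_neg_bdCoeff c] at he
  split_ifs at he with hcond
  swap; · exact absurd he zero_ne_one
  obtain ⟨⟨v, hv, hva⟩, -⟩ := hcond
  obtain ⟨x, hx⟩ := Finset.card_eq_one.1 (card_tgt_eq_one hc.existsUnique_src hin hsum hva)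
  have hmem : ∀ f, N.tgt f = some v → f = x := fun f hf => by
    simpa [hf] using hx.subset (Finset.mem_filter.2 ⟨Finset.mem_univ f, hf⟩)
  exact ⟨v, hv, fun f hf => (hmem f hf).trans (hmem e hv).symm⟩

lemma sum_ite_src_eq_none_smul (hc : IsConstellation N P c) [Fintype N.V] [Fintype P.E]
    {M : Type*} [AddCommGroup M] (F : P.E → M) :
    ∑ f, (if P.src f = none then (1 : ℤ) else 0) • F f = ∑ v, F (c v) := by
  simp only [ite_smul, one_smul, zero_smul, ← Finset.sum_filter]
  rw [show ∑ v, F (c v) = ∑ f ∈ Finset.univ.map ⟨c, hc.injective⟩, F f from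
    (Finset.sum_map Finset.univ ⟨c, hc.injective⟩ F).symm]
  congr 1
  ext f
  simp only [Finset.mem_filter, Finset.mem_univ, true_and, Finset.mem_map,
    Function.Embedding.coeFn_mk]
  exact ⟨hc.exists_eq f, fun ⟨v, hv⟩ => hv ▸ hc.src_eq_none v⟩

end IsConstellation

end BdCoeff

namespace OpetopicSequence

open Classical

variable {n : ℕ} (S : OpetopicSequence n)

noncomputable instance (q : Fin (n + 1)) : Fintype (S.N q).E := @Fintype.ofFinite _ (S.N q).finE

noncomputable instance (q : Fin (n + 1)) : Fintype (S.N q).V := @Fintype.ofFinite _ (S.N q).finV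

lemma existsUnique_src (q : Fin (n + 1)) (v : (S.N q).V) : ∃! f, (S.N q).src f = some v := by
  induction q using Fin.lastCases with
  | last => exact (S.top_noV.false v).elim
  | cast p => exact (S.constell p).existsUnique_src v

lemma existsUnique_tgt_of_eq_zero {q : Fin (n + 1)} (hq : q = 0) (v : (S.N q).V) :
    ∃! f, (S.N q).tgt f = some v := by
  subst hq
  exact S.linear0.existsUnique_tgt v

lemma exists_tgt (q : Fin (n + 1)) (v : (S.N q).V) : ∃ f, (S.N q).tgt f = some v := by
  induction q using Fin.cases with
  | zero => exact (S.existsUnique_tgt_of_eq_zero rfl v).exists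
  | succ p => exact (S.constell p).exists_tgt (fun u => (S.existsUnique_src _ u).exists) v

lemma pathTo_output (q : Fin (n + 1)) (e : (S.N q).E) : (S.N q).PathTo e (S.N q).output :=
  (S.N q).pathTo_output (fun v => (S.existsUnique_src q v).exists) e

abbrev Cell := Σ q : Fin (n + 1), (S.N q).E

noncomputable def levelChain (q : Fin (n + 1)) (w : (S.N q).E → ℤ) : S.Cell →₀ ℤ :=
  ∑ f, w f • Finsupp.single ⟨q, f⟩ 1

lemma levelChain_apply_self (q : Fin (n + 1)) (w : (S.N q).E → ℤ) (f : (S.N q).E) :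
    S.levelChain q w ⟨q, f⟩ = w f := by
  simp [levelChain, Finsupp.single_apply]

lemma levelChain_apply_of_ne {q q' : Fin (n + 1)} (w : (S.N q).E → ℤ) (f : (S.N q').E)
    (h : q' ≠ q) : S.levelChain q w ⟨q', f⟩ = 0 := by
  simp [levelChain, Ne.symm h]

lemma mem_support_levelChain {q : Fin (n + 1)} {w : (S.N q).E → ℤ} {b : S.Cell} :
    b ∈ (S.levelChain q w).support ↔ ∃ f, b = ⟨q, f⟩ ∧ w f ≠ 0 := by
  obtain ⟨q', f'⟩ := b
  by_cases h : q' = q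
  · subst h
    simp [levelChain_apply_self]
  · simp [levelChain_apply_of_ne _ _ _ h, h]

lemma levelChain_ext {q : Fin (n + 1)} {w : (S.N q).E → ℤ} {x : S.Cell →₀ ℤ}
    (hq : ∀ f, x ⟨q, f⟩ = w f)
    (hne : ∀ q' (f : (S.N q').E), q' ≠ q → x ⟨q', f⟩ = 0) :
    S.levelChain q w = x := by
  ext ⟨q', f⟩
  by_cases h : q' = q
  · subst h
    rw [levelChain_apply_self, hq]
  · rw [levelChain_apply_of_ne _ _ _ h, hne _ _ h]

lemma levelChain_ite_eq (q : Fin (n + 1)) (f₀ : (S.N q).E) :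
    S.levelChain q (fun f => if f = f₀ then 1 else 0) = Finsupp.single ⟨q, f₀⟩ 1 :=
  S.levelChain_ext (by simp [Finsupp.single_apply, eq_comm])
    (fun _ _ h => by simp [h.symm])

lemma mapRange_levelChain (q : Fin (n + 1)) (w : (S.N q).E → ℤ) {F : ℤ → ℤ}
    (hF : F 0 = 0) :
    Finsupp.mapRange F hF (S.levelChain q w) = S.levelChain q (F ∘ w) :=
  (S.levelChain_ext (by simp [levelChain_apply_self])
    (fun _ _ h => by simp [levelChain_apply_of_ne _ _ _ h, hF])).symm

lemma sum_levelChain {M : Type*} [AddCommGroup M] (q : Fin (n + 1)) (w : (S.N q).E → ℤ)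
    (g : S.Cell → M) :
    (S.levelChain q w).sum (fun b m => m • g b) = ∑ f, w f • g ⟨q, f⟩ := by
  rw [levelChain, ← Finsupp.sum_finsetSum_index (fun _ => zero_zsmul _)
    (fun _ _ _ => add_zsmul _ _ _)]
  simp [Finsupp.smul_single]

lemma sum_smul_levelChain {ι : Type*} [Fintype ι] (q : Fin (n + 1)) (u : ι → ℤ)
    (w : ι → (S.N q).E → ℤ) :
    ∑ x, u x • S.levelChain q (w x) = S.levelChain q (fun f => ∑ x, u x * w x f) := by
  simp only [levelChain, Finset.smul_sum, smul_smul, Finset.sum_smul]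
  exact Finset.sum_comm

-- Matching on the value of the level, rather than using `Fin.cases`, makes `cellBd` of a cell
-- at level `p + 1` reduce by `rfl` whatever form `p + 1` is written in, so no casts are needed.
noncomputable def cellBd : S.Cell → S.Cell →₀ ℤ
  | ⟨⟨0, _⟩, _⟩ => 0
  | ⟨⟨q + 1, hq⟩, e⟩ => S.levelChain ⟨q, by omega⟩ (bdCoeff (S.c ⟨q, by omega⟩) e)

lemma cellBd_succ (p : Fin n) (e : (S.N p.succ).E) :
    S.cellBd ⟨p.succ, e⟩ = S.levelChain p.castSucc (bdCoeff (S.c p) e) := rfl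

lemma cellBd_of_val_eq_zero {a : S.Cell} (ha : a.1.val = 0) : S.cellBd a = 0 := by
  obtain ⟨⟨q, hq⟩, e⟩ := a
  obtain rfl : q = 0 := ha
  rfl

lemma cell_induction {P : S.Cell → Prop} (zero : ∀ e : (S.N 0).E, P ⟨0, e⟩)
    (succ : ∀ (p : Fin n) (e : (S.N p.succ).E), P ⟨p.succ, e⟩) (a : S.Cell) : P a := by
  obtain ⟨q, e⟩ := a
  induction q using Fin.cases with
  | zero => exact zero e
  | succ p => exact succ p e

def cellEps (a : S.Cell) : ℤ := if a.1 = 0 then 1 else 0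

lemma sum_smul_cellBd_cellBd (a : S.Cell) :
    (S.cellBd a).sum (fun b m => m • S.cellBd b) = 0 := by
  induction a using S.cell_induction with
  | zero e => rw [cellBd_of_val_eq_zero _ rfl, Finsupp.sum_zero_index]
  | succ p e => ?_
  rw [cellBd_succ, sum_levelChain]
  obtain ⟨_ | r, hr⟩ := p
  · exact Finset.sum_eq_zero fun f _ => by rw [cellBd_of_val_eq_zero _ rfl, smul_zero]
  have hr' : r < n := by omega
  have h : ∀ f, S.cellBd ⟨Fin.castSucc ⟨r + 1, hr⟩, f⟩ =
      S.levelChain (Fin.castSucc ⟨r, hr'⟩) (bdCoeff (S.c ⟨r, hr'⟩) f) :=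
    fun f => S.cellBd_succ ⟨r, hr'⟩ f
  have hzero :
      ∀ g, ∑ f, bdCoeff (S.c ⟨r + 1, hr⟩) e f * bdCoeff (S.c ⟨r, hr'⟩) f g = 0 :=
    sum_bdCoeff_mul_bdCoeff (S.constell ⟨r, hr'⟩).src_eq_none
      (S.constell ⟨r + 1, hr⟩).existsUnique_src e
  simp only [h, sum_smul_levelChain, hzero]
  simp [levelChain]

lemma sum_mul_cellEps_cellBd (a : S.Cell) :
    (S.cellBd a).sum (fun b m => m * S.cellEps b) = 0 := by
  induction a using S.cell_induction with
  | zero e => rw [cellBd_of_val_eq_zero _ rfl, Finsupp.sum_zero_index]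
  | succ p e => ?_
  rw [cellBd_succ]
  refine (S.sum_levelChain _ _ S.cellEps).trans ?_
  by_cases hp : p.castSucc = 0
  · simp only [cellEps, hp, if_true, smul_eq_mul, mul_one]
    exact sum_bdCoeff_eq_zero (S.existsUnique_src _) (S.existsUnique_tgt_of_eq_zero hp) _ _
  · simp [cellEps, hp]

noncomputable abbrev complex : FADC where
  B := S.Cell
  dim a := a.1
  bd := S.cellBd
  eps := S.cellEps
  bd_dim := by
    intro a b hb
    induction a using S.cell_induction with
    | zero e => simp [cellBd_of_val_eq_zero _ (rfl : (⟨0, e⟩ : S.Cell).1.val = 0)] at hb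
    | succ p e =>
      obtain ⟨f, rfl, -⟩ := S.mem_support_levelChain.1 hb
      rfl
  eps_dim b hb := if_neg (Fin.pos_iff_ne_zero.1 hb)
  bd_bd := S.sum_smul_cellBd_cellBd
  eps_bd := S.sum_mul_cellEps_cellBd

lemma complex_bdc_single (a : S.Cell) : S.complex.bdc (Finsupp.single a 1) = S.cellBd a := by
  rw [FADC.bdc_single, one_smul]

lemma complex_bdp_succ (p : Fin n) (e : (S.N p.succ).E) :
    S.complex.bdp (Finsupp.single ⟨p.succ, e⟩ 1) =
      Finsupp.single ⟨p.castSucc, (S.constell p).exitEdge e⟩ 1 := by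
  rw [FADC.bdp, complex_bdc_single, cellBd_succ, mapRange_levelChain]
  simp only [Function.comp_def, (S.constell p).max_bdCoeff]
  exact S.levelChain_ite_eq _ _

lemma complex_bdm_succ (p : Fin n) (e : (S.N p.succ).E) :
    S.complex.bdm (Finsupp.single ⟨p.succ, e⟩ 1) =
      S.levelChain p.castSucc (fun f => max (-bdCoeff (S.c p) e f) 0) := by
  rw [FADC.bdm, complex_bdc_single, cellBd_succ]
  refine (S.levelChain_ext (fun f => ?_) (fun q f h => ?_)).symm
  · simp [levelChain_apply_self]
  · simp [levelChain_apply_of_ne _ _ _ h]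

lemma complex_bdm_of_val_eq_zero {a : S.Cell} (ha : a.1.val = 0) :
    S.complex.bdm (Finsupp.single a 1) = 0 := by
  rw [FADC.bdm, complex_bdc_single, cellBd_of_val_eq_zero _ ha]
  simp

lemma complex_bdm_input (p : Fin n) (v : (S.N p.castSucc).V) :
    S.complex.bdm (Finsupp.single ⟨p.succ, S.c p v⟩ 1) =
      S.levelChain p.castSucc (fun f => if (S.N p.castSucc).tgt f = some v then 1 else 0) := by
  rw [complex_bdm_succ]
  simp only [(S.constell p).max_neg_bdCoeff_self]

lemma complex_bdp_input (p : Fin n) {v : (S.N p.castSucc).V} {f : (S.N p.castSucc).E}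
    (hf : (S.N p.castSucc).src f = some v) :
    S.complex.bdp (Finsupp.single ⟨p.succ, S.c p v⟩ 1) =
      Finsupp.single ⟨p.castSucc, f⟩ 1 := by
  rw [complex_bdp_succ, (S.constell p).exitEdge_self_eq_iff.2 hf]

noncomputable def top : S.Cell := ⟨Fin.last n, S.top_single.exists.choose⟩

lemma eq_top (e : (S.N (Fin.last n)).E) : (⟨Fin.last n, e⟩ : S.Cell) = S.top :=
  congrArg _ (S.top_single.unique trivial trivial)

lemma complex_atomic : S.complex.Atomic n := by
  refine ⟨fun b => Nat.lt_succ_iff.1 b.1.isLt, ⟨S.top, Fin.val_last n, fun a ha => ?_⟩,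
    fun b hb => ?_⟩
  · obtain ⟨q, e⟩ := a
    obtain rfl : q = Fin.last n := Fin.ext ha
    exact S.eq_top e
  obtain ⟨q, e⟩ := b
  induction q using Fin.lastCases with
  | last => exact absurd hb (by simp)
  | cast p =>
    cases hs : (S.N p.castSucc).src e with
    | some v =>
      refine ⟨⟨p.succ, S.c p v⟩, Nat.lt_succ_self _, Or.inr ?_⟩
      simp [S.complex_bdp_input p hs]
    | none =>
      cases ht : (S.N p.castSucc).tgt e with
      | none => exact absurd (((S.N _).eq_output ht) ▸ hs) (S.constell p).src_output_ne_none
      | some v =>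
        refine ⟨⟨p.succ, S.c p v⟩, Nat.lt_succ_self _, Or.inl ?_⟩
        rw [complex_bdm_input, S.mem_support_levelChain]
        exact ⟨e, rfl, by simp [ht]⟩

lemma complex_bdm_input_of_forall_tgt_iff (p : Fin n) {v : (S.N p.castSucc).V}
    {f₀ : (S.N p.castSucc).E} (h : ∀ f, (S.N p.castSucc).tgt f = some v ↔ f = f₀) :
    S.complex.bdm (Finsupp.single ⟨p.succ, S.c p v⟩ 1) =
      Finsupp.single ⟨p.castSucc, f₀⟩ 1 := by
  rw [complex_bdm_input]
  simp only [h]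
  exact S.levelChain_ite_eq _ _

def thinCell (a : S.Cell) : Prop := (S.N a.1).thinE a.2

lemma complex_bdp_basis (b : S.Cell) (hb : 0 < S.complex.dim b) :
    ∃ a, ¬ S.thinCell a ∧ S.complex.bdp (Finsupp.single b 1) = Finsupp.single a 1 := by
  induction b using S.cell_induction with
  | zero e => exact absurd hb (lt_irrefl 0)
  | succ p e =>
    refine ⟨⟨p.castSucc, (S.constell p).exitEdge e⟩, fun hthin => ?_,
      S.complex_bdp_succ p e⟩
    obtain ⟨v, hv, -⟩ := ((S.constell p).exitEdge_spec e).1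
    simp [(S.N _).thinE_input _ hthin] at hv

lemma complex_bdp_single (b : S.Cell) (hb : 0 < S.complex.dim b) :
    ∃ a, S.complex.bdp (Finsupp.single b 1) = Finsupp.single a 1 :=
  (S.complex_bdp_basis b hb).imp fun _ h => h.2

lemma complex_loopFree : S.complex.LoopFree := by
  have : ∀ q, Std.Irrefl (TransGen (S.N q).step) := fun q => ⟨(S.N q).acyclic⟩
  have : IsStrictOrder S.Cell (Sigma.Lex (· < ·) fun q => TransGen (S.N q).step) := {}
  refine FADC.loopFree_of_bdpSingle S.complex_bdp_single
    (Sigma.Lex (· < ·) fun q => TransGen (S.N q).step) fun t b hb b' hb' => ?_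
  induction t using S.cell_induction with
  | zero e => simp [complex_bdm_of_val_eq_zero _ (rfl : (⟨0, e⟩ : S.Cell).1.val = 0)] at hb
  | succ p e =>
    rw [complex_bdm_succ, S.mem_support_levelChain] at hb
    obtain ⟨f, rfl, hf⟩ := hb
    rw [complex_bdp_succ, Finsupp.mem_support_single] at hb'
    obtain ⟨rfl, -⟩ := hb'
    rw [max_neg_bdCoeff] at hf
    split_ifs at hf with hcond
    · obtain ⟨⟨u, hu, hue⟩, -⟩ := hcond
      exact Sigma.Lex.right _ _ ((S.constell p).transGen_exitEdge hu hue)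
    · exact absurd rfl hf

lemma complex_isODC : IsODC S.complex S.thinCell n where
  atomic := S.complex_atomic
  loopFree := S.complex_loopFree
  unital := FADC.unital_of_bdpSingle S.complex_bdp_single fun _ hb => if_pos (Fin.ext hb)
  thin_pos b hb := by
    induction b using S.cell_induction with
    | zero e => exact absurd hb (S.noThin0 e)
    | succ p e => exact Nat.succ_pos _
  bdp_basis := S.complex_bdp_basis
  bdm_thin b hb := by
    induction b using S.cell_induction with
    | zero e => exact absurd hb (S.noThin0 e)
    | succ p e =>
      obtain ⟨v, rfl⟩ := (S.constell p).exists_eq e ((S.N _).thinE_input e hb)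
      have hv := ((S.constell p).thinV_iff v).2 hb
      obtain ⟨f₀, hf₀, huniq⟩ := (S.N _).thinV_unique v hv
      exact ⟨⟨p.castSucc, f₀⟩, (S.N _).thinV_nonthin v f₀ hv hf₀,
        S.complex_bdm_input_of_forall_tgt_iff p fun f => ⟨huniq f, fun h => h ▸ hf₀⟩⟩

lemma src_eq_none_of_last (f : (S.N (Fin.last n)).E) : (S.N (Fin.last n)).src f = none := by
  cases h : (S.N (Fin.last n)).src f with
  | none => rfl
  | some v => exact (S.top_noV.false v).elim

lemma complex_bdp_iterate_top (q : Fin (n + 1)) :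
    S.complex.bdp^[n - q] (Finsupp.single S.top 1) = Finsupp.single ⟨q, (S.N q).output⟩ 1 := by
  induction q using Fin.reverseInduction with
  | last => rw [Fin.val_last, Nat.sub_self, Function.iterate_zero_apply, S.eq_top]
  | cast p ih =>
    rw [show n - (p.castSucc : ℕ) = n - p.succ + 1 by simp; omega,
      Function.iterate_succ_apply', ih, complex_bdp_succ,
      (S.constell p).exitEdge_eq_output (fun v => S.pathTo_output _ _)]

noncomputable def inputChain (q : Fin (n + 1)) : S.Cell →₀ ℤ :=
  S.levelChain q fun f => if (S.N q).src f = none then 1 else 0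

lemma complex_atomNeg_top (q : Fin (n + 1)) : S.complex.atomNeg S.top n q = S.inputChain q := by
  rw [FADC.atomNeg, if_pos (Nat.lt_succ_iff.1 q.isLt)]
  induction q using Fin.lastCases with
  | last =>
    rw [Fin.val_last, Nat.sub_self, Function.iterate_zero_apply, ← S.levelChain_ite_eq, top]
    simp only [inputChain, src_eq_none_of_last, if_true]
    exact congrArg _ (funext fun f => if_pos (S.top_single.unique trivial trivial))
  | cast p =>
    rw [show n - (p.castSucc : ℕ) = n - p.succ + 1 by simp; omega, FADC.bdm_iterate_succ,
      complex_bdp_iterate_top, complex_bdm_succ]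
    simp only [(S.constell p).max_neg_bdCoeff_of_forall_pathTo (fun v => S.pathTo_output _ _)]
    rfl

lemma complex_gch_top (q : Fin (n + 1)) :
    S.complex.gch (S.complex.atomNeg S.top n q) (S.complex.atomNeg S.top n (q + 1)) =
      S.levelChain q fun _ => 1 := by
  induction q using Fin.lastCases with
  | last =>
    have hz : S.complex.atomNeg S.top n (n + 1) = 0 := if_neg (by omega)
    rw [FADC.gch, Fin.val_last, hz, Finsupp.sum_zero_index, add_zero]
    refine (S.complex_atomNeg_top (Fin.last n)).trans ?_
    simp [inputChain, src_eq_none_of_last]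
  | cast p =>
    rw [FADC.gch, complex_atomNeg_top, show (p.castSucc : ℕ) + 1 = p.succ from rfl,
      complex_atomNeg_top S p.succ]
    unfold inputChain
    rw [sum_levelChain, (S.constell p).sum_ite_src_eq_none_smul
        (fun f => S.complex.bdp (Finsupp.single ⟨p.succ, f⟩ 1)),
      Finset.sum_congr rfl fun v _ => S.complex_bdp_succ p (S.c p v)]
    refine (S.levelChain_ext (fun f => ?_) (fun q f hq => ?_)).symm
    · simp only [Finsupp.add_apply, levelChain_apply_self, Finsupp.finsetSum_apply,
        Finsupp.single_apply, Sigma.mk.injEq, heq_eq_eq, true_and,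
        (S.constell p).exitEdge_self_eq_iff]
      rw [sum_boole_eq_ite_exists fun a b ha hb => Option.some_injective _ (ha.symm.trans hb)]
      cases (S.N p.castSucc).src f <;> simp
    · simp [levelChain_apply_of_ne _ _ _ hq, Ne.symm hq]

noncomputable def vertexCell : (q : Fin (n + 1)) → (S.N q).V → S.Cell :=
  Fin.lastCases (fun v => (S.top_noV.false v).elim) fun p v => ⟨p.succ, S.c p v⟩

lemma vertexCell_castSucc (p : Fin n) (v : (S.N p.castSucc).V) :
    S.vertexCell p.castSucc v = ⟨p.succ, S.c p v⟩ := by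
  simp [vertexCell]

lemma realizedBy_complex : RealizedBy S.complex S.thinCell n S.top S := by
  refine ⟨fun q f => ⟨q, f⟩, S.vertexCell, fun q => ?_,
    fun p v => (S.vertexCell_castSucc p v).symm⟩
  rw [complex_gch_top]
  refine ⟨fun f g h => eq_of_heq (Sigma.mk.inj_iff.1 h).2,
    fun f => S.mem_support_levelChain.2 ⟨f, rfl, one_ne_zero⟩, fun b hb => ?_, ?_⟩
  · obtain ⟨f, rfl, -⟩ := S.mem_support_levelChain.1 hb
    exact ⟨f, rfl⟩
  induction q using Fin.lastCases with
  | last =>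
    have := S.top_noV
    simp [FADC.atomNeg, Function.injective_of_subsingleton, thinCell]
  | cast p =>
    simp only [vertexCell_castSucc, show (p.castSucc : ℕ) + 1 = p.succ from rfl,
      complex_atomNeg_top, inputChain]
    refine ⟨fun v w h => ?_, fun v => ?_, fun b hb => ?_, fun f v => ?_, fun f v => ?_,
      fun _ => Iff.rfl, (S.constell p).thinV_iff⟩
    · rw [vertexCell_castSucc, vertexCell_castSucc] at h
      exact (S.constell p).injective (eq_of_heq (Sigma.mk.inj_iff.1 h).2)
    · simp [levelChain_apply_self, (S.constell p).src_eq_none]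
    · obtain ⟨f, rfl, hf⟩ := S.mem_support_levelChain.1 hb
      obtain ⟨v, rfl⟩ := (S.constell p).exists_eq f (of_not_not fun h => hf (if_neg h))
      exact ⟨v, rfl⟩
    · rw [complex_bdp_succ, Finsupp.mem_support_single, ← (S.constell p).exitEdge_self_eq_iff]
      simp [eq_comm]
    · rw [complex_bdm_input, mem_support_levelChain]
      simp

lemma complex_reduced_iff : ODCReduced S.complex S.thinCell ↔ ∀ q, (S.N q).Reduced := by
  constructor
  · intro hred q e he
    obtain ⟨a, -, ha⟩ := hred ⟨q, e⟩ he
    induction a using S.cell_induction with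
    | zero f =>
      rw [complex_bdm_of_val_eq_zero _ rfl] at ha
      simpa using congrArg (· ⟨q, e⟩) ha
    | succ p f =>
      rw [complex_bdm_succ] at ha
      obtain rfl : q = p.castSucc := of_not_not fun hq => by
        simpa [levelChain_apply_of_ne _ _ _ hq] using congrArg (· ⟨q, e⟩) ha
      refine (S.constell p).tgt_unique_of_max_neg_bdCoeff (S.exists_tgt _) (a := f) fun g => ?_
      simpa [levelChain_apply_self, Finsupp.single_apply, eq_comm] using congrArg (· ⟨_, g⟩) ha
  · rintro hall ⟨q, e⟩ he
    obtain ⟨v, hv, huniq⟩ := hall q e he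
    induction q using Fin.lastCases with
    | last => exact (S.top_noV.false v).elim
    | cast p =>
      refine ⟨⟨p.succ, S.c p v⟩, fun h => ?_,
        S.complex_bdm_input_of_forall_tgt_iff p fun f => ⟨huniq f, fun h => h ▸ hv⟩⟩
      simpa using congrArg (fun a : S.Cell => a.1.val) h

end OpetopicSequence

/-- Theorem 5.3 (existence part): every `n`-dimensional opetopic sequence is
isomorphic to the sequence `G_0^-(⟨K⟩) → … → G_n^-(⟨K⟩)` for some `n`-dimensional
opetopic directed complex `K`; moreover `K` is reduced iff the sequence is an
`n`-dimensional opetope (i.e. all its networks are reduced). -/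
theorem stmt15 (n : ℕ) (S : OpetopicSequence n) :
    ∃ (K : FADC) (thin : K.B → Prop) (g : K.B),
      IsODC K thin n ∧ K.dim g = n ∧ RealizedBy K thin n g S ∧
      (ODCReduced K thin ↔ ∀ q : Fin (n + 1), (S.N q).Reduced) :=
  ⟨S.complex, S.thinCell, S.top, S.complex_isODC, Fin.val_last n, S.realizedBy_complex,
    S.complex_reduced_iff⟩
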